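/- arXiv:2301.13161 — 3 statements merged into one kernel-verified Lean document; each statement's English description precedes it below -/
import Mathlib

section
/- Let σ ≥ 6 be a real number, k ≥ 1 a natural number, φ₁,…,φ_k real numbers with Σ_{j=1}^k cos(φ_j) ≠ 0, and d ≠ 0 a real number. If (−sin(π/σ), −cos(π/σ)) + d · (Σ_{j=1}^k cos(φ_j), Σ_{j=1}^k sin(φ_j)) = (cos(π/σ + π/6), −sin(π/σ + π/6)), then (Σ_{j=1}^k sin(φ_j)) / (Σ_{j=1}^k cos(φ_j)) = 4/(tan(π/σ) + √3) − √3. -/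
open Real Finset

/-- If the chain of `k` steps of length `d ≠ 0` in directions `φ j` starting at the
fundamental vertex `(−sin(π/σ), −cos(π/σ))` ends at `(cos(π/σ+π/6), −sin(π/σ+π/6))`,
then the slope condition `(Σ sin φ)/(Σ cos φ) = 4/(tan(π/σ)+√3) − √3` holds. -/
theorem chp_slope_condition (σ : ℝ) (hσ : 6 ≤ σ) (k : ℕ) (hk : 1 ≤ k) (φ : Fin k → ℝ)
    (d : ℝ) (hd : d ≠ 0)
    (hS : ∑ j, Real.cos (φ j) ≠ 0)
    (h : ((-Real.sin (π / σ), -Real.cos (π / σ)) : ℝ × ℝ)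
          + d • ((∑ j, Real.cos (φ j), ∑ j, Real.sin (φ j)) : ℝ × ℝ)
        = (Real.cos (π / σ + π / 6), -Real.sin (π / σ + π / 6))) :
    (∑ j, Real.sin (φ j)) / (∑ j, Real.cos (φ j))
      = 4 / (Real.tan (π / σ) + Real.sqrt 3) - Real.sqrt 3 := by
  set a := π / σ with ha
  set C := ∑ j, Real.cos (φ j) with hC
  set S := ∑ j, Real.sin (φ j) with hSdef
  have hσ0 : (0:ℝ) < σ := by linarith
  have ha0 : 0 < a := div_pos Real.pi_pos hσ0
  have ha6 : a ≤ π / 6 := by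
    rw [ha, div_le_div_iff₀ hσ0 (by norm_num)]
    nlinarith [Real.pi_pos]
  have hapi2 : a < π / 2 := lt_of_le_of_lt ha6 (by linarith [Real.pi_pos])
  have hcos : 0 < Real.cos a := Real.cos_pos_of_mem_Ioo ⟨by linarith, hapi2⟩
  have hsin : 0 ≤ Real.sin a := Real.sin_nonneg_of_nonneg_of_le_pi ha0.le
    (by linarith [Real.pi_pos])
  have hsqrt3 : Real.sqrt 3 ^ 2 = 3 := Real.sq_sqrt (by norm_num)
  have hsqrt3pos : 0 < Real.sqrt 3 := Real.sqrt_pos.mpr (by norm_num)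
  have htan : Real.tan a = Real.sin a / Real.cos a := Real.tan_eq_sin_div_cos a
  have htanpos : 0 < Real.tan a + Real.sqrt 3 := by
    have : 0 ≤ Real.tan a := by rw [htan]; positivity
    linarith
  clear_value a C S
  obtain ⟨h1, h2⟩ := Prod.mk.injEq .. ▸ h
  simp only [Prod.fst_add, Prod.snd_add, Prod.smul_fst, Prod.smul_snd, smul_eq_mul] at h1 h2
  -- h1 : -sin a + d * C = cos (a + π/6)
  -- h2 : -cos a + d * S = -sin (a + π/6)
  have hdC : d * C ≠ 0 := mul_ne_zero hd hS
  have key : S / C = (d * S) / (d * C) := by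
    rw [mul_div_mul_left _ _ hd]
  have hDC : d * C = Real.cos (a + π/6) + Real.sin a := by linarith
  have hDS : d * S = Real.cos a - Real.sin (a + π/6) := by linarith
  rw [key, hDC, hDS, Real.cos_add, Real.sin_add, Real.cos_pi_div_six, Real.sin_pi_div_six,
    htan]
  have hden : Real.cos a * (Real.sqrt 3 / 2) - Real.sin a * (1/2) + Real.sin a ≠ 0 := by
    nlinarith
  have hden2 : Real.sin a / Real.cos a + Real.sqrt 3 ≠ 0 := by
    rw [htan] at htanpos; linarith
  have hden3 : Real.cos a * Real.sqrt 3 + Real.sin a ≠ 0 := by nlinarith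
  have hden4 : Real.cos a * Real.sqrt 3 - Real.sin a + Real.sin a * 2 ≠ 0 := by nlinarith
  field_simp
  linear_combination (Real.cos a * Real.sin a + Real.sqrt 3 * Real.cos a ^ 2) * hsqrt3
end

section
/- Let m ≥ 1 and k ≥ 1 be natural numbers with m dividing k, let σ = 6m, set N = 3k(k+1)+1 and S = 3k cos(π/6 − π/σ) / (σ sin(π/σ)). Then 8π N · csc(2π/σ) · (sin(π/σ) + cos(π/σ + π/6))² / (σ (4S + tan(π/σ) + √3)²) = π N σ cot(π/σ) / (6k cot(π/σ) + σ)². -/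
open Real

/-- For the fully vertex-occupied curved hexagonal packing in a regular `σ`-gon with
`σ = 6m` and `m ∣ k`, the general density formula reduces to the simplified one. -/
theorem chp_density_vertex_occupied (m k : ℕ) (hm : 1 ≤ m) (hk : 1 ≤ k)
    (hdvd : m ∣ k) (σ : ℕ) (hσ : σ = 6 * m) (N : ℕ) (hN : N = 3 * k * (k + 1) + 1)
    (S : ℝ)
    (hS : S = 3 * k * Real.cos (π / 6 - π / σ) / (σ * Real.sin (π / σ))) :
    8 * π * (N : ℝ) * (1 / Real.sin (2 * π / σ))
        * (Real.sin (π / σ) + Real.cos (π / σ + π / 6)) ^ 2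
        / (σ * (4 * S + Real.tan (π / σ) + Real.sqrt 3) ^ 2)
      = π * (N : ℝ) * σ * Real.cot (π / σ)
          / (6 * k * Real.cot (π / σ) + σ) ^ 2 := by
  have hσ6 : (6:ℝ) ≤ (σ:ℝ) := by
    have : (6:ℕ) ≤ σ := by omega
    exact_mod_cast this
  have hσpos : (0:ℝ) < (σ:ℝ) := by linarith
  set θ : ℝ := π / σ with hθdef
  have hθpos : 0 < θ := div_pos pi_pos hσpos
  have hθle : θ ≤ π / 6 := by
    rw [hθdef]
    gcongr
  have hθlt : θ < π / 2 := by nlinarith [pi_pos]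
  have hs : 0 < Real.sin θ := Real.sin_pos_of_pos_of_lt_pi hθpos (by nlinarith [pi_pos])
  have hc : 0 < Real.cos θ := Real.cos_pos_of_mem_Ioo ⟨by linarith, hθlt⟩
  have hr : (0:ℝ) ≤ Real.sqrt 3 := Real.sqrt_nonneg 3
  have h2θ : 2 * π / (σ:ℝ) = 2 * θ := by rw [hθdef]; ring
  have hsin2 : Real.sin (2 * π / σ) = 2 * Real.sin θ * Real.cos θ := by
    rw [h2θ, Real.sin_two_mul]
  have hcosadd : Real.cos (θ + π / 6)
      = Real.cos θ * (Real.sqrt 3 / 2) - Real.sin θ * (1 / 2) := by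
    rw [Real.cos_add, Real.cos_pi_div_six, Real.sin_pi_div_six]
  have hcossub : Real.cos (π / 6 - θ)
      = (Real.sqrt 3 / 2) * Real.cos θ + (1 / 2) * Real.sin θ := by
    rw [Real.cos_sub, Real.cos_pi_div_six, Real.sin_pi_div_six]
  have hk1 : (1:ℝ) ≤ (k:ℝ) := by exact_mod_cast hk
  have hSpos : 0 < S := by
    rw [hS, hcossub]
    apply div_pos
    · nlinarith [mul_nonneg hr hc.le]
    · positivity
  have htanpos : 0 < Real.tan θ := Real.tan_pos_of_pos_of_lt_pi_div_two hθpos hθlt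
  have hden1 : (0:ℝ) < 4 * S + Real.tan θ + Real.sqrt 3 := by nlinarith
  have hcot : Real.cot θ = Real.cos θ / Real.sin θ := Real.cot_eq_cos_div_sin θ
  have hcotpos : 0 < Real.cot θ := by rw [hcot]; positivity
  have hden2 : (0:ℝ) < 6 * (k:ℝ) * Real.cot θ + σ := by nlinarith
  rw [hS, hsin2, hcosadd, hcossub, hcot, Real.tan_eq_sin_div_cos]
  have hd1 : (4 * (3 * (k:ℝ) * ((Real.sqrt 3 / 2) * Real.cos θ + (1 / 2) * Real.sin θ) /
      (σ * Real.sin θ)) + Real.sin θ / Real.cos θ + Real.sqrt 3) ≠ 0 := by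
    have := hden1
    rw [hS, hcossub, Real.tan_eq_sin_div_cos] at this
    linarith
  have hd2 : (6 * (k:ℝ) * (Real.cos θ / Real.sin θ) + σ) ≠ 0 := by
    have := hden2
    rw [hcot] at this
    linarith
  field_simp
  ring
end

section
/- Fix a natural number k ≥ 1, set N = 3k(k+1)+1 and S = Σ_{j=1}^k cos((2j−1)π/(6k)). Then the limit as the real number s tends to +∞ of 8π N · csc(2π/s) · (sin(π/s) + cos(π/s + π/6))² / (s (4S + tan(π/s) + √3)²) equals N sin²(π/(6k)) / (1 + sin(π/(6k)))². -/
open Real Finset Filter Topology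

/-!
Since `s * sin (2π/s) → 2π`, `tan (π/s) → 0` and `sin (π/s) + cos (π/s + π/6) → √3/2`, the polygon
density tends to `3N / (4S + √3)²`. Multiplying `S` by `2 sin θ` with `θ = π/(6k)` telescopes the sum
of odd cosines into `sin (2kθ) = sin (π/3) = √3/2`, so `4S = √3 / sin θ`, and substituting this
gives Graham–Lubachevsky's value `N sin² θ / (1 + sin θ)²`.
-/

theorem two_mul_sin_mul_sum_range_cos_odd (θ : ℝ) (n : ℕ) :
    2 * sin θ * ∑ j ∈ range n, cos ((2 * j + 1) * θ) = sin (2 * n * θ) := by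
  have step (j : ℕ) : 2 * sin θ * cos ((2 * j + 1) * θ)
      = sin (2 * ((j + 1 : ℕ) : ℝ) * θ) - sin (2 * (j : ℝ) * θ) := by
    have e₁ : 2 * ((j + 1 : ℕ) : ℝ) * θ = (2 * j + 1) * θ + θ := by push_cast; ring
    have e₂ : 2 * (j : ℝ) * θ = (2 * j + 1) * θ - θ := by ring
    rw [e₁, e₂, sin_add, sin_sub]
    ring
  rw [mul_sum, sum_congr rfl fun j _ => step j,
    sum_range_sub (fun j : ℕ => sin (2 * (j : ℝ) * θ))]
  simp

theorem four_mul_sum_range_cos_odd_mul_sin (k : ℕ) (hk : k ≠ 0) :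
    4 * (∑ j ∈ range k, cos ((2 * (j : ℝ) + 1) * π / (6 * k))) * sin (π / (6 * k)) = √3 := by
  have hangle : 2 * (k : ℝ) * π / (6 * k) = π / 3 := by field_simp; ring
  have h := two_mul_sin_mul_sum_range_cos_odd (π / (6 * k)) k
  simp only [← mul_div_assoc] at h
  rw [hangle, sin_pi_div_three] at h
  linarith

theorem tendsto_mul_sin_div_atTop (c : ℝ) :
    Tendsto (fun s : ℝ => s * sin (c / s)) atTop (𝓝 c) := by
  have hsinc : Tendsto (fun s : ℝ => c * sinc (c / s)) atTop (𝓝 (c * sinc 0)) :=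
    ((continuous_sinc.tendsto 0).comp (tendsto_const_nhds.div_atTop tendsto_id)).const_mul c
  rw [sinc_zero, mul_one] at hsinc
  refine hsinc.congr' ?_
  filter_upwards [eventually_ne_atTop 0] with s hs
  rcases eq_or_ne c 0 with rfl | hc
  · simp
  · rw [sinc_of_ne_zero (div_ne_zero hc hs)]
    field_simp

theorem tendsto_polygon_density (N S : ℝ) (hS : 4 * S + √3 ≠ 0) :
    Tendsto
      (fun s : ℝ =>
        8 * π * N * (1 / sin (2 * π / s)) * (sin (π / s) + cos (π / s + π / 6)) ^ 2
          / (s * (4 * S + tan (π / s) + √3) ^ 2))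
      atTop (𝓝 (3 * N / (4 * S + √3) ^ 2)) := by
  have hπs : Tendsto (fun s : ℝ => π / s) atTop (𝓝 0) :=
    tendsto_const_nhds.div_atTop tendsto_id
  have hsin : Tendsto (fun s : ℝ => sin (π / s)) atTop (𝓝 0) := by
    simpa [Function.comp_def] using (continuous_sin.tendsto 0).comp hπs
  have hcos : Tendsto (fun s : ℝ => cos (π / s + π / 6)) atTop (𝓝 (√3 / 2)) := by
    simpa [cos_pi_div_six, Function.comp_def] using
      (continuous_cos.tendsto (0 + π / 6)).comp (hπs.add_const (π / 6))
  have htan : Tendsto (fun s : ℝ => tan (π / s)) atTop (𝓝 0) := by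
    simpa [Function.comp_def] using ((continuousAt_tan.2 (by simp)).tendsto).comp hπs
  have hlim := (((hsin.add hcos).pow 2).const_mul (8 * π * N)).div
    ((tendsto_mul_sin_div_atTop (2 * π)).mul
      (((htan.const_add (4 * S)).add_const √3).pow 2))
    (by simp [pi_ne_zero, hS])
  have hvalue : 8 * π * N * (0 + √3 / 2) ^ 2 / (2 * π * (4 * S + 0 + √3) ^ 2)
      = 3 * N / (4 * S + √3) ^ 2 := by
    simp only [zero_add, add_zero, div_pow, sq_sqrt (by norm_num : (0 : ℝ) ≤ 3)]
    field_simp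
    ring
  rw [hvalue] at hlim
  refine hlim.congr fun s => ?_
  simp only [Pi.div_apply]
  -- keeps `ring` from expanding the square under the inverse
  generalize 4 * S + tan (π / s) + √3 = B
  ring

theorem three_mul_div_sq_eq {N S x : ℝ} (h : 4 * S * x = √3) :
    3 * N / (4 * S + √3) ^ 2 = N * x ^ 2 / (1 + x) ^ 2 := by
  have hx : x ≠ 0 := right_ne_zero_of_mul (a := 4 * S) (by rw [h]; positivity)
  have hfactor : (4 * S + √3) * x = √3 * (1 + x) := by linear_combination h
  calc 3 * N / (4 * S + √3) ^ 2
      = 3 * (N * x ^ 2) / ((4 * S + √3) * x) ^ 2 := by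
        rw [mul_pow, ← mul_div_mul_right _ _ (pow_ne_zero 2 hx)]
        ring
    _ = N * x ^ 2 / (1 + x) ^ 2 := by
        rw [hfactor, mul_pow, sq_sqrt (by norm_num : (0 : ℝ) ≤ 3),
          mul_div_mul_left _ _ (by norm_num : (3 : ℝ) ≠ 0)]

theorem chp_density_circle_limit_general (k : ℕ) (hk : 1 ≤ k) (N : ℕ) (S : ℝ)
    (hS : S = ∑ j ∈ Finset.range k, Real.cos ((2 * (j : ℝ) + 1) * π / (6 * k))) :
    Filter.Tendsto
      (fun s : ℝ =>
        8 * π * (N : ℝ) * (1 / Real.sin (2 * π / s))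
          * (Real.sin (π / s) + Real.cos (π / s + π / 6)) ^ 2
          / (s * (4 * S + Real.tan (π / s) + Real.sqrt 3) ^ 2))
      Filter.atTop
      (nhds ((N : ℝ) * Real.sin (π / (6 * k)) ^ 2
        / (1 + Real.sin (π / (6 * k))) ^ 2)) := by
  have hsum : 4 * S * sin (π / (6 * k)) = √3 :=
    hS ▸ four_mul_sum_range_cos_odd_mul_sin k (by omega)
  have hsin_pos : 0 < sin (π / (6 * k)) := by
    have hk' : (1 : ℝ) < 6 * k := by
      have : (1 : ℝ) ≤ k := by exact_mod_cast hk
      linarith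
    exact sin_pos_of_pos_of_lt_pi (by positivity) (div_lt_self pi_pos hk')
  have hS_pos : 0 < S := pos_of_mul_pos_left (by linarith [sqrt_pos.2 three_pos]) hsin_pos.le
  rw [← three_mul_div_sq_eq hsum]
  exact tendsto_polygon_density N S (by positivity)

/-- As `σ → ∞`, the polygon density formula evaluated at the circle border angles tends
to Graham–Lubachevsky's density for curved hexagonal packing of `N` disks in a circle. -/
theorem chp_density_circle_limit (k : ℕ) (hk : 1 ≤ k) (N : ℕ)
    (hN : N = 3 * k * (k + 1) + 1) (S : ℝ)
    (hS : S = ∑ j ∈ Finset.range k, Real.cos ((2 * (j : ℝ) + 1) * π / (6 * k))) :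
    Filter.Tendsto
      (fun s : ℝ =>
        8 * π * (N : ℝ) * (1 / Real.sin (2 * π / s))
          * (Real.sin (π / s) + Real.cos (π / s + π / 6)) ^ 2
          / (s * (4 * S + Real.tan (π / s) + Real.sqrt 3) ^ 2))
      Filter.atTop
      (nhds ((N : ℝ) * Real.sin (π / (6 * k)) ^ 2
        / (1 + Real.sin (π / (6 * k))) ^ 2)) :=
  chp_density_circle_limit_general k hk N S hS
end
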